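/- arXiv:2012.03336 — 4 statements merged into one kernel-verified Lean document; each statement's English description precedes it below -/
import Mathlib

section
/- Let L > 0. The rational basis functions φ_n are orthogonal in L²(ℝ, ℂ): for all integers p ≠ n, ∫_ℝ φ_p(x) · conj(φ_n(x)) dx = 0, and for every integer n, ∫_ℝ |φ_n(x)|² dx = π / L. -/
/-!
With `z = L + ix`, the Cayley transform `u = z / z̄` is unimodular and `φ_n = uⁿ / z̄`, so
`φ_p · conj φ_n = u^(p-n) / |z|²`. For `m ≠ 0` the function `uᵐ / (L² + x²)` is `(2iLm)⁻¹` times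
the derivative of `uᵐ`, which tends to `(-1)ᵐ` at both ends of the line, so its integral vanishes.
For `p = n` the integrand is `1 / (L² + x²)`, whose integral is `π / L`.
-/

open MeasureTheory

/-- Rational basis function `φ_n(x) = (L + ix)^n / (L - ix)^(n+1)`. -/
noncomputable def ratBasis (L : ℝ) (n : ℤ) (x : ℝ) : ℂ :=
  ((L : ℂ) + Complex.I * x) ^ n / ((L : ℂ) - Complex.I * x) ^ (n + 1)

open Complex Filter Topology
open scoped ComplexConjugate

section CauchyIntegral
variable {L : ℝ}

lemma inv_sq_add_sq_eq (hL : L ≠ 0) (x : ℝ) :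
    (L ^ 2 + x ^ 2)⁻¹ = (L ^ 2)⁻¹ * (1 + (x / L) ^ 2)⁻¹ := by
  field_simp

lemma integrable_inv_sq_add_sq (hL : L ≠ 0) : Integrable fun x : ℝ => (L ^ 2 + x ^ 2)⁻¹ := by
  simpa only [inv_sq_add_sq_eq hL] using (integrable_inv_one_add_sq.comp_div hL).const_mul _

lemma integral_univ_inv_sq_add_sq (hL : L ≠ 0) :
    ∫ x : ℝ, (L ^ 2 + x ^ 2)⁻¹ = Real.pi / |L| := by
  simp_rw [inv_sq_add_sq_eq hL]
  rw [integral_const_mul, Measure.integral_comp_div (fun u => (1 + u ^ 2)⁻¹),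
    integral_univ_inv_one_add_sq, smul_eq_mul, ← sq_abs]
  field_simp

end CauchyIntegral

lemma conj_ofReal_sub_I_mul (L x : ℝ) : conj ((L : ℂ) - I * x) = L + I * x := by
  simp

lemma ofReal_add_I_mul_mul_sub (L x : ℝ) :
    ((L : ℂ) + I * x) * (L - I * x) = ((L ^ 2 + x ^ 2 : ℝ) : ℂ) := by
  push_cast
  linear_combination (-(x : ℂ) ^ 2) * I_sq

noncomputable def cayley (L x : ℝ) : ℂ := ((L : ℂ) + I * x) / ((L : ℂ) - I * x)

lemma conj_cayley (L x : ℝ) : conj (cayley L x) = (cayley L x)⁻¹ := by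
  rw [cayley, map_div₀, ← conj_ofReal_sub_I_mul, Complex.conj_conj, inv_div]

section Cayley
variable {L : ℝ}

lemma ofReal_sub_I_mul_ne_zero (hL : L ≠ 0) (x : ℝ) : (L : ℂ) - I * x ≠ 0 := fun h =>
  hL (by simpa using congrArg re h)

lemma norm_cayley (hL : L ≠ 0) (x : ℝ) : ‖cayley L x‖ = 1 := by
  rw [cayley, norm_div, ← conj_ofReal_sub_I_mul, RCLike.norm_conj,
    div_self (norm_ne_zero_iff.mpr (ofReal_sub_I_mul_ne_zero hL x))]

lemma cayley_ne_zero (hL : L ≠ 0) (x : ℝ) : cayley L x ≠ 0 :=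
  norm_ne_zero_iff.mp (by simp [norm_cayley hL])

lemma continuous_cayley (hL : L ≠ 0) : Continuous (cayley L) :=
  (by fun_prop : Continuous fun x : ℝ => (L : ℂ) + I * x).div (by fun_prop)
    (ofReal_sub_I_mul_ne_zero hL)

lemma hasDerivAt_cayley (hL : L ≠ 0) (x : ℝ) :
    HasDerivAt (cayley L) (2 * L * I / ((L : ℂ) - I * x) ^ 2) x := by
  have hid : HasDerivAt (fun y : ℝ => I * y) I x := by
    simpa using (ofRealCLM.hasDerivAt (x := x)).const_mul I
  exact ((hid.const_add (L : ℂ)).div (hid.const_sub (L : ℂ))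
    (ofReal_sub_I_mul_ne_zero hL x)).congr_deriv (by ring)

lemma hasDerivAt_cayley_zpow (hL : L ≠ 0) (m : ℤ) (x : ℝ) :
    HasDerivAt (fun y => cayley L y ^ m)
      (2 * L * m * I * (cayley L x ^ m / ((L ^ 2 + x ^ 2 : ℝ) : ℂ))) x := by
  have hu := cayley_ne_zero hL x
  have hz := (div_ne_zero_iff.mp hu).1
  have hw := ofReal_sub_I_mul_ne_zero hL x
  refine ((hasDerivAt_zpow m _ (Or.inl hu)).comp x (hasDerivAt_cayley hL x)).congr_deriv ?_
  rw [zpow_sub_one₀ hu, ← ofReal_add_I_mul_mul_sub, cayley]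
  field_simp

lemma tendsto_cayley_cocompact (hL : L ≠ 0) : Tendsto (cayley L) (cocompact ℝ) (𝓝 (-1)) := by
  have hw : Tendsto (fun x : ℝ => ‖(L : ℂ) - I * x‖) (cocompact ℝ) atTop :=
    tendsto_atTop_mono (fun x => by simpa using abs_im_le_norm ((L : ℂ) - I * x))
      tendsto_norm_cocompact_atTop
  have hdiv : Tendsto (fun x : ℝ => 2 * (L : ℂ) / ((L : ℂ) - I * x)) (cocompact ℝ) (𝓝 0) := by
    rw [tendsto_zero_iff_norm_tendsto_zero]
    simpa only [norm_div] using tendsto_const_nhds.div_atTop hw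
  convert hdiv.const_add (-1) using 1
  · ext x
    rw [cayley, eq_neg_add_iff_add_eq, one_add_div (ofReal_sub_I_mul_ne_zero hL x)]
    ring
  · simp

lemma integrable_cayley_zpow_div (hL : L ≠ 0) (m : ℤ) :
    Integrable fun x => cayley L x ^ m / ((L ^ 2 + x ^ 2 : ℝ) : ℂ) := by
  have hpos (x : ℝ) : 0 < L ^ 2 + x ^ 2 := by positivity
  have hcont : Continuous fun x => cayley L x ^ m / ((L ^ 2 + x ^ 2 : ℝ) : ℂ) :=
    ((continuous_cayley hL).zpow₀ m fun x => Or.inl (cayley_ne_zero hL x)).div (by fun_prop)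
      fun x => ofReal_ne_zero.mpr (hpos x).ne'
  refine (integrable_inv_sq_add_sq hL).mono' hcont.aestronglyMeasurable (.of_forall fun x => ?_)
  rw [norm_div, norm_zpow, norm_cayley hL, one_zpow, norm_real, Real.norm_of_nonneg (hpos x).le,
    one_div]

lemma integral_cayley_zpow_div (hL : L ≠ 0) {m : ℤ} (hm : m ≠ 0) :
    ∫ x, cayley L x ^ m / ((L ^ 2 + x ^ 2 : ℝ) : ℂ) = 0 := by
  have hlim : Tendsto (fun x => cayley L x ^ m) (cocompact ℝ) (𝓝 ((-1) ^ m)) :=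
    (continuousAt_zpow₀ (-1 : ℂ) m (Or.inl (by norm_num))).tendsto.comp
      (tendsto_cayley_cocompact hL)
  have key := integral_of_hasDerivAt_of_tendsto (hasDerivAt_cayley_zpow hL m)
    ((integrable_cayley_zpow_div hL m).const_mul _) (hlim.mono_left atBot_le_cocompact)
    (hlim.mono_left atTop_le_cocompact)
  rw [sub_self, integral_const_mul] at key
  exact (mul_eq_zero.mp key).resolve_left (by simp [hL, hm])

lemma ratBasis_eq_cayley_zpow_div (hL : L ≠ 0) (n : ℤ) (x : ℝ) :
    ratBasis L n x = cayley L x ^ n / ((L : ℂ) - I * x) := by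
  rw [ratBasis, cayley, div_zpow, zpow_add_one₀ (ofReal_sub_I_mul_ne_zero hL x), div_div]

lemma ratBasis_mul_conj (hL : L ≠ 0) (p n : ℤ) (x : ℝ) :
    ratBasis L p x * conj (ratBasis L n x) =
      cayley L x ^ (p - n) / ((L ^ 2 + x ^ 2 : ℝ) : ℂ) := by
  rw [ratBasis_eq_cayley_zpow_div hL, ratBasis_eq_cayley_zpow_div hL, map_div₀, map_zpow₀,
    conj_cayley, conj_ofReal_sub_I_mul, ← ofReal_add_I_mul_mul_sub, inv_zpow', zpow_neg,
    zpow_sub₀ (cayley_ne_zero hL x), div_mul_div_comm, ← div_eq_mul_inv,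
    mul_comm ((L : ℂ) - _)]

lemma norm_ratBasis_sq (hL : L ≠ 0) (n : ℤ) (x : ℝ) :
    ‖ratBasis L n x‖ ^ 2 = (L ^ 2 + x ^ 2)⁻¹ := by
  have h := ratBasis_mul_conj hL n n x
  rw [mul_conj', sub_self, zpow_zero, one_div] at h
  exact_mod_cast h

end Cayley

theorem ratBasis_orthogonality (L : ℝ) (hL : 0 < L) :
    (∀ p n : ℤ, p ≠ n →
      ∫ x : ℝ, ratBasis L p x * (starRingEnd ℂ) (ratBasis L n x) = 0) ∧
    (∀ n : ℤ, ∫ x : ℝ, ‖ratBasis L n x‖ ^ 2 = Real.pi / L) := by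
  refine ⟨fun p n hpn => ?_, fun n => ?_⟩
  · simp_rw [ratBasis_mul_conj hL.ne']
    exact integral_cayley_zpow_div hL.ne' (sub_ne_zero.mpr hpn)
  · simp_rw [norm_ratBasis_sq hL.ne']
    rw [integral_univ_inv_sq_add_sq hL.ne', abs_of_pos hL]
end

section
/- Let L > 0. For every integer n and every x ∈ ℝ, the second derivative of the rational basis function satisfies φ_n″(x) = −(1/(4L²)) · ( n(n−1) · φ_{n−2}(x) + 4n² · φ_{n−1}(x) + (6n² + 6n + 2) · φ_n(x) + 4(n+1)² · φ_{n+1}(x) + (n+2)(n+1) · φ_{n+2}(x) ). -/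
/-!
Write `a = L + ix` and `b = L - ix`, so that `φ_n = a^n / b^(n+1)`, `φ_{n±1} = φ_n (a/b)^{±1}` and
`a + b = 2L`. The logarithmic derivative of `φ_n` is `i (n/a + (n+1)/b)`, and multiplying it by
`(a + b)/(2L) = 1` turns the derivative into the three-term recurrence
`φ_n' = i/(2L) (n φ_{n-1} + (2n+1) φ_n + (n+1) φ_{n+1})`.
Applying the recurrence twice gives the five-term formula, with `(i/(2L))^2 = -1/(4L^2)`.
-/

open Complex

lemma ofReal_add_I_mul_ofReal_ne_zero {L : ℝ} (hL : L ≠ 0) (x : ℝ) : (L : ℂ) + I * x ≠ 0 :=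
  fun h => hL (by simpa using congrArg re h)

lemma ofReal_sub_I_mul_ofReal_ne_zero {L : ℝ} (hL : L ≠ 0) (x : ℝ) : (L : ℂ) - I * x ≠ 0 :=
  fun h => hL (by simpa using congrArg re h)

lemma ratBasis_add_one {L : ℝ} (hL : L ≠ 0) (n : ℤ) (x : ℝ) :
    ratBasis L (n + 1) x = ratBasis L n x * ((L + I * x) / (L - I * x)) := by
  have ha := ofReal_add_I_mul_ofReal_ne_zero hL x
  have hb := ofReal_sub_I_mul_ofReal_ne_zero hL x
  simp only [ratBasis]
  generalize (L : ℂ) + I * x = a at ha ⊢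
  generalize (L : ℂ) - I * x = b at hb ⊢
  rw [zpow_add_one₀ ha, zpow_add_one₀ hb (n + 1)]
  field_simp

lemma ratBasis_sub_one {L : ℝ} (hL : L ≠ 0) (n : ℤ) (x : ℝ) :
    ratBasis L (n - 1) x = ratBasis L n x * ((L - I * x) / (L + I * x)) := by
  rw [← sub_add_cancel n 1, ratBasis_add_one hL, add_sub_cancel_right]
  field_simp [ofReal_add_I_mul_ofReal_ne_zero hL x, ofReal_sub_I_mul_ofReal_ne_zero hL x]

lemma hasDerivAt_ratBasis_logDeriv {L : ℝ} (hL : L ≠ 0) (n : ℤ) (x : ℝ) :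
    HasDerivAt (ratBasis L n)
      (ratBasis L n x * (I * (n / (L + I * x) + (n + 1) / (L - I * x)))) x := by
  have ha := ofReal_add_I_mul_ofReal_ne_zero hL x
  have hb := ofReal_sub_I_mul_ofReal_ne_zero hL x
  have hda : HasDerivAt (fun y : ℝ => (L : ℂ) + I * y) I x := by
    simpa using (ofRealCLM.hasDerivAt.const_mul I).const_add (L : ℂ)
  have hdb : HasDerivAt (fun y : ℝ => (L : ℂ) - I * y) (-I) x := by
    simpa using (ofRealCLM.hasDerivAt.const_mul I).const_sub (L : ℂ)
  have hnum : HasDerivAt (fun y : ℝ => ((L : ℂ) + I * y) ^ n) (n * (L + I * x) ^ (n - 1) * I) x :=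
    (hasDerivAt_zpow n _ (Or.inl ha)).comp (h₂ := fun z : ℂ => z ^ n) x hda
  have hden : HasDerivAt (fun y : ℝ => ((L : ℂ) - I * y) ^ (n + 1))
      ((n + 1 : ℤ) * (L - I * x) ^ (n + 1 - 1) * -I) x :=
    (hasDerivAt_zpow (n + 1) _ (Or.inl hb)).comp (h₂ := fun z : ℂ => z ^ (n + 1)) x hdb
  refine (hnum.div hden (zpow_ne_zero _ hb)).congr_deriv ?_
  simp only [ratBasis]
  generalize (L : ℂ) + I * x = a at ha ⊢
  generalize (L : ℂ) - I * x = b at hb ⊢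
  rw [zpow_sub_one₀ ha, add_sub_cancel_right, zpow_add_one₀ hb]
  push_cast
  field_simp
  ring

lemma hasDerivAt_ratBasis {L : ℝ} (hL : L ≠ 0) (n : ℤ) (x : ℝ) :
    HasDerivAt (ratBasis L n)
      (I / (2 * L) * (n * ratBasis L (n - 1) x + (2 * n + 1) * ratBasis L n x +
        (n + 1) * ratBasis L (n + 1) x)) x := by
  convert hasDerivAt_ratBasis_logDeriv hL n x using 1
  have ha := ofReal_add_I_mul_ofReal_ne_zero hL x
  have hb := ofReal_sub_I_mul_ofReal_ne_zero hL x
  have hsum : (L + I * x) + (L - I * x) = (2 * L : ℂ) := by ring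
  have hab : (L + I * x) + (L - I * x) ≠ (0 : ℂ) := by
    rw [hsum]
    exact mul_ne_zero two_ne_zero (ofReal_ne_zero.mpr hL)
  rw [ratBasis_sub_one hL, ratBasis_add_one hL, ← hsum]
  generalize (L : ℂ) + I * x = a at ha hab ⊢
  generalize (L : ℂ) - I * x = b at hb hab ⊢
  field_simp
  ring

/-- Second-derivative recurrence for the rational basis functions. -/
theorem ratBasis_second_deriv (L : ℝ) (hL : 0 < L) (n : ℤ) (x : ℝ) :
    iteratedDeriv 2 (fun y : ℝ => ratBasis L n y) x =
      -(1 / (4 * (L : ℂ) ^ 2)) *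
        (((n : ℂ) * ((n : ℂ) - 1)) * ratBasis L (n - 2) x +
          (4 * (n : ℂ) ^ 2) * ratBasis L (n - 1) x +
          (6 * (n : ℂ) ^ 2 + 6 * (n : ℂ) + 2) * ratBasis L n x +
          (4 * ((n : ℂ) + 1) ^ 2) * ratBasis L (n + 1) x +
          (((n : ℂ) + 2) * ((n : ℂ) + 1)) * ratBasis L (n + 2) x) := by
  have hderiv : deriv (ratBasis L n) = fun y => I / (2 * L) * (n * ratBasis L (n - 1) y +
      (2 * n + 1) * ratBasis L n y + (n + 1) * ratBasis L (n + 1) y) :=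
    funext fun y => (hasDerivAt_ratBasis hL.ne' n y).deriv
  have hsecond := ((((hasDerivAt_ratBasis hL.ne' (n - 1) x).const_mul (n : ℂ)).add
    ((hasDerivAt_ratBasis hL.ne' n x).const_mul (2 * n + 1 : ℂ))).add
    ((hasDerivAt_ratBasis hL.ne' (n + 1) x).const_mul (n + 1 : ℂ))).const_mul (I / (2 * L))
  rw [iteratedDeriv_succ, iteratedDeriv_one, hderiv]
  refine hsecond.deriv.trans ?_
  have hI : I / (2 * L) * (I / (2 * L)) = -(1 / (4 * (L : ℂ) ^ 2)) := by
    rw [div_mul_div_comm, I_mul_I]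
    ring
  rw [show n - 1 - 1 = n - 2 by ring, sub_add_cancel, add_sub_cancel_right,
    show n + 1 + 1 = n + 2 by ring]
  push_cast
  rw [← hI]
  ring
end

section
/- Let Q(x) = 4/(1 + x²), so that Q′(x) = −8x/(1 + x²)². For every x ∈ ℝ, the principal value H Q′(x) exists and equals 4(1 − x²)/(1 + x²)², and Q satisfies the Benjamin–Ono ground state equation: −Q(x) − H Q′(x) + Q(x)²/2 = 0 for all x ∈ ℝ. -/
/-!
Partial fractions give an explicit antiderivative of `Q'(y)/(x - y)` on each side of `x`, of the
form `Ψ(y) - Q'(x) log |x - y|` with `Ψ` smooth, which is `C arctan y + o(1)` as `|y| → ∞`,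
where `C = 4(1 - x²)/(1 + x²)²`. Cutting out `(x - ε, x + ε)`, the logarithms at
`x ∓ ε` cancel, so the truncated integral is `Ψ(x - ε) - Ψ(x + ε) + C π`, which tends to `C π`.
Hence `H Q'(x) = C`, and the ground state equation becomes an algebraic identity.
-/

open MeasureTheory Filter

/-- The principal value Hilbert transform of `f : ℝ → ℝ` at `x` exists and equals `A`. -/
def HilbertPVR (f : ℝ → ℝ) (x A : ℝ) : Prop :=
  Tendsto (fun ε : ℝ =>
      (1 / Real.pi) * ∫ y in {y : ℝ | ε < |x - y|}, f y / (x - y))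
    (nhdsWithin 0 (Set.Ioi 0)) (nhds A)

open Real Set Topology

lemma setOf_lt_abs_sub_eq_Iio_union_Ioi (x ε : ℝ) :
    {y : ℝ | ε < |x - y|} = Iio (x - ε) ∪ Ioi (x + ε) := by
  ext y
  simp only [mem_ofPred_eq, mem_union, mem_Iio, mem_Ioi, lt_abs]
  constructor <;> rintro (h | h) <;> [left; right; left; right] <;> linarith

lemma MeasureTheory.Integrable.integrableOn_div_sub {f : ℝ → ℝ} (hf : Integrable f) (x : ℝ)
    {ε : ℝ} (hε : 0 < ε) : IntegrableOn (fun y => f y / (x - y)) {y | ε < |x - y|} := by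
  have hmeas : MeasurableSet {y : ℝ | ε < |x - y|} := measurableSet_lt (by fun_prop) (by fun_prop)
  simp_rw [div_eq_inv_mul]
  refine hf.integrableOn.bdd_mul (c := ε⁻¹) (by fun_prop) ?_
  filter_upwards [ae_restrict_mem hmeas] with y hy
  rw [norm_inv, Real.norm_eq_abs]
  exact inv_anti₀ hε hy.le

lemma integral_setOf_lt_abs_sub_eq {f G : ℝ → ℝ} {x ε a b : ℝ} (hε : 0 < ε)
    (hG : ∀ y ≠ x, HasDerivAt G (f y / (x - y)) y)
    (hf : IntegrableOn (fun y => f y / (x - y)) {y | ε < |x - y|})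
    (hbot : Tendsto G atBot (𝓝 a)) (htop : Tendsto G atTop (𝓝 b)) :
    ∫ y in {y | ε < |x - y|}, f y / (x - y) = G (x - ε) - G (x + ε) + (b - a) := by
  rw [setOf_lt_abs_sub_eq_Iio_union_Ioi] at hf ⊢
  have hleft : ∫ y in Iio (x - ε), f y / (x - y) = G (x - ε) - a := by
    rw [← integral_Iic_eq_integral_Iio]
    refine integral_Iic_of_hasDerivAt_of_tendsto' (fun y hy => hG y ?_) ?_ hbot
    · exact (lt_of_le_of_lt hy (by linarith : x - ε < x)).ne
    · exact (integrableOn_Iic_iff_integrableOn_Iio).2 (hf.mono_set subset_union_left)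
  have hright : ∫ y in Ioi (x + ε), f y / (x - y) = b - G (x + ε) := by
    refine integral_Ioi_of_hasDerivAt_of_tendsto' (fun y hy => hG y ?_)
      (hf.mono_set subset_union_right) htop
    exact (lt_of_lt_of_le (by linarith : x < x + ε) hy).ne'
  have hdisj : Disjoint (Iio (x - ε)) (Ioi (x + ε)) :=
    (Iic_disjoint_Ioi (by linarith)).mono_left Iio_subset_Iic_self
  rw [setIntegral_union hdisj measurableSet_Ioi (hf.mono_set subset_union_left)
    (hf.mono_set subset_union_right), hleft, hright]
  ring

theorem hilbertPVR_of_hasDerivAt {f G : ℝ → ℝ} {x a b : ℝ}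
    (hG : ∀ y ≠ x, HasDerivAt G (f y / (x - y)) y)
    (hf : ∀ ε > 0, IntegrableOn (fun y => f y / (x - y)) {y | ε < |x - y|})
    (hbot : Tendsto G atBot (𝓝 a)) (htop : Tendsto G atTop (𝓝 b))
    (hsymm : Tendsto (fun ε => G (x - ε) - G (x + ε)) (𝓝[>] 0) (𝓝 0)) :
    HilbertPVR f x ((b - a) / π) := by
  have hlim := (hsymm.add_const (b - a)).const_mul (1 / π)
  rw [zero_add, one_div_mul_eq_div] at hlim
  refine hlim.congr' ?_
  filter_upwards [self_mem_nhdsWithin] with ε hε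
  rw [integral_setOf_lt_abs_sub_eq hε hG (hf ε hε) hbot htop]

theorem hilbertPVR_of_hasDerivAt_sub_log {f Ψ : ℝ → ℝ} {x c a b : ℝ}
    (hΨ : ContinuousAt Ψ x)
    (hG : ∀ y ≠ x, HasDerivAt (fun z => Ψ z - c * log (x - z)) (f y / (x - y)) y)
    (hf : ∀ ε > 0, IntegrableOn (fun y => f y / (x - y)) {y | ε < |x - y|})
    (hbot : Tendsto (fun z => Ψ z - c * log (x - z)) atBot (𝓝 a))
    (htop : Tendsto (fun z => Ψ z - c * log (x - z)) atTop (𝓝 b)) :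
    HilbertPVR f x ((b - a) / π) := by
  refine hilbertPVR_of_hasDerivAt hG hf hbot htop ?_
  have hΨ' : Tendsto (fun ε => Ψ (x - ε) - Ψ (x + ε)) (𝓝 0) (𝓝 (Ψ x - Ψ x)) := by
    refine (hΨ.tendsto.comp ?_).sub (hΨ.tendsto.comp ?_)
    · simpa using (tendsto_id (x := 𝓝 (0:ℝ))).const_sub x
    · simpa using (tendsto_id (x := 𝓝 (0:ℝ))).const_add x
  rw [sub_self] at hΨ'
  refine (hΨ'.mono_left nhdsWithin_le_nhds).congr fun ε => ?_
  -- `Real.log` is `log |·|`, so the singular terms cancel.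
  simp only [sub_sub_cancel, sub_add_cancel_left, log_neg_eq_log]
  ring

lemma hasDerivAt_one_add_sq (y : ℝ) : HasDerivAt (fun z : ℝ => 1 + z ^ 2) (2 * y) y := by
  simpa using (hasDerivAt_pow 2 y).const_add 1

/-- The part of the partial-fraction antiderivative of `Q'(y) / (x - y)`, `Q'(y) = -8y/(1 + y²)²`,
that is smooth at `y = x`. -/
noncomputable def boPsi (x y : ℝ) : ℝ :=
  4 * (1 - x ^ 2) / (1 + x ^ 2) ^ 2 * arctan y - 4 * x / (1 + x ^ 2) ^ 2 * log (1 + y ^ 2)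
    + 4 / (1 + x ^ 2) * (y / (1 + y ^ 2)) + 4 * x / (1 + x ^ 2) * (1 / (1 + y ^ 2))

lemma continuous_boPsi (x : ℝ) : Continuous (boPsi x) := by
  have h : ∀ y : ℝ, 1 + y ^ 2 ≠ 0 := fun y => by positivity
  unfold boPsi
  fun_prop (disch := first | exact h _ | exact (h _).symm)

lemma hasDerivAt_boPsi_sub_log (x : ℝ) {y : ℝ} (hy : y ≠ x) :
    HasDerivAt (fun z => boPsi x z - -8 * x / (1 + x ^ 2) ^ 2 * log (x - z))
      (-8 * y / (1 + y ^ 2) ^ 2 / (x - y)) y := by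
  have hy1 : 1 + y ^ 2 ≠ 0 := by positivity
  have hx1 : 1 + x ^ 2 ≠ 0 := by positivity
  have hxy : x - y ≠ 0 := sub_ne_zero.2 hy.symm
  have hsq := hasDerivAt_one_add_sq y
  have hΨ := ((((hasDerivAt_arctan y).const_mul (4 * (1 - x ^ 2) / (1 + x ^ 2) ^ 2)).sub
    ((hsq.log hy1).const_mul (4 * x / (1 + x ^ 2) ^ 2))).add
    (((hasDerivAt_id' y).div hsq hy1).const_mul (4 / (1 + x ^ 2)))).add
    (((hasDerivAt_const y 1).div hsq hy1).const_mul (4 * x / (1 + x ^ 2)))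
  have hlog := (((hasDerivAt_id' y).const_sub x).log hxy).const_mul (-8 * x / (1 + x ^ 2) ^ 2)
  convert (show HasDerivAt (fun z => boPsi x z - -8 * x / (1 + x ^ 2) ^ 2 * log (x - z)) _ y
    from hΨ.sub hlog) using 1
  field_simp
  ring

lemma tendsto_boPsi_sub_log_sub_arctan_cobounded (x : ℝ) :
    Tendsto (fun z => boPsi x z - -8 * x / (1 + x ^ 2) ^ 2 * log (x - z)
      - 4 * (1 - x ^ 2) / (1 + x ^ 2) ^ 2 * arctan z) (Bornology.cobounded ℝ) (𝓝 0) := by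
  -- In the variable `t = z⁻¹` the remainder is continuous at `t = 0`, where it vanishes.
  set φ : ℝ → ℝ := fun t => -(4 * x / (1 + x ^ 2) ^ 2) * log ((t ^ 2 + 1) / (x * t - 1) ^ 2)
    + 4 / (1 + x ^ 2) * (t / (t ^ 2 + 1)) + 4 * x / (1 + x ^ 2) * (t ^ 2 / (t ^ 2 + 1))
  have hφ : ContinuousAt φ 0 := by
    have h : ∀ t : ℝ, t ^ 2 + 1 ≠ 0 := fun t => by positivity
    refine ((continuousAt_const.mul (ContinuousAt.log ?_ (by norm_num))).add ?_).add ?_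
    · exact ContinuousAt.div (by fun_prop) (by fun_prop) (by norm_num)
    all_goals fun_prop (disch := exact h _)
  have hφ0 : φ 0 = 0 := by simp [φ]
  refine (hφ0 ▸ hφ.tendsto.comp tendsto_inv₀_cobounded).congr' ?_
  filter_upwards [Bornology.eventually_ne_cobounded 0, Bornology.eventually_ne_cobounded x]
    with z hz hzx
  have hxz : x - z ≠ 0 := sub_ne_zero.2 (Ne.symm hzx)
  simp only [φ, boPsi, Function.comp]
  have hratio : (z⁻¹ ^ 2 + 1) / (x * z⁻¹ - 1) ^ 2 = (1 + z ^ 2) / (x - z) ^ 2 := by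
    field_simp
  rw [hratio, log_div (by positivity) (by positivity), log_pow]
  field_simp
  ring

lemma tendsto_boPsi_sub_log_atTop (x : ℝ) :
    Tendsto (fun z => boPsi x z - -8 * x / (1 + x ^ 2) ^ 2 * log (x - z)) atTop
      (𝓝 (4 * (1 - x ^ 2) / (1 + x ^ 2) ^ 2 * (π / 2))) := by
  have h := ((tendsto_boPsi_sub_log_sub_arctan_cobounded x).mono_left
    IsOrderBornology.atTop_le_cobounded).add
    ((tendsto_nhds_of_tendsto_nhdsWithin tendsto_arctan_atTop).const_mul
      (4 * (1 - x ^ 2) / (1 + x ^ 2) ^ 2))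
  simpa using h

lemma tendsto_boPsi_sub_log_atBot (x : ℝ) :
    Tendsto (fun z => boPsi x z - -8 * x / (1 + x ^ 2) ^ 2 * log (x - z)) atBot
      (𝓝 (4 * (1 - x ^ 2) / (1 + x ^ 2) ^ 2 * -(π / 2))) := by
  have h := ((tendsto_boPsi_sub_log_sub_arctan_cobounded x).mono_left
    IsOrderBornology.atBot_le_cobounded).add
    ((tendsto_nhds_of_tendsto_nhdsWithin tendsto_arctan_atBot).const_mul
      (4 * (1 - x ^ 2) / (1 + x ^ 2) ^ 2))
  simpa using h

lemma integrable_neg_eight_mul_div_one_add_sq_sq :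
    Integrable fun y : ℝ => -8 * y / (1 + y ^ 2) ^ 2 := by
  have hcont : Continuous fun y : ℝ => -8 * y / (1 + y ^ 2) ^ 2 :=
    .div (by fun_prop) (by fun_prop) fun y => by positivity
  refine (integrable_inv_one_add_sq.const_mul 4).mono' hcont.aestronglyMeasurable
    (ae_of_all _ fun y => ?_)
  have hy : 0 < 1 + y ^ 2 := by positivity
  rw [Real.norm_eq_abs, abs_div, abs_mul, abs_of_pos (pow_pos hy 2), div_le_iff₀ (pow_pos hy 2)]
  norm_num
  field_simp
  nlinarith [sq_abs y, sq_nonneg (|y| - 1)]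

/-- `Q(x) = 4/(1+x²)` satisfies the BO ground state equation `-Q - HQ' + Q²/2 = 0`. -/
theorem BO_ground_state_equation (x : ℝ) :
    deriv (fun y : ℝ => 4 / (1 + y ^ 2)) x = -8 * x / (1 + x ^ 2) ^ 2 ∧
    HilbertPVR (fun y : ℝ => -8 * y / (1 + y ^ 2) ^ 2) x
      (4 * (1 - x ^ 2) / (1 + x ^ 2) ^ 2) ∧
    -(4 / (1 + x ^ 2)) - 4 * (1 - x ^ 2) / (1 + x ^ 2) ^ 2
      + (4 / (1 + x ^ 2)) ^ 2 / 2 = 0 := by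
  have hx : 1 + x ^ 2 ≠ 0 := by positivity
  refine ⟨?_, ?_, by field_simp; ring⟩
  · exact ((hasDerivAt_const x (4 : ℝ)).div (hasDerivAt_one_add_sq x) hx).deriv.trans
      (by field_simp; ring)
  · have h := hilbertPVR_of_hasDerivAt_sub_log (continuous_boPsi x).continuousAt
      (fun y hy => hasDerivAt_boPsi_sub_log x hy)
      (fun ε hε => integrable_neg_eight_mul_div_one_add_sq_sq.integrableOn_div_sub x hε)
      (tendsto_boPsi_sub_log_atBot x) (tendsto_boPsi_sub_log_atTop x)
    convert h using 1
    field_simp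
    ring
end

section
/- For every Schwartz function f : ℝ → ℝ, the principal value H f(x) exists for every x ∈ ℝ, and the Hilbert transform is skew-adjoint on Schwartz functions: for all Schwartz f, g : ℝ → ℝ, ∫_ℝ (H f)(x) · g(x) dx = − ∫_ℝ f(x) · (H g)(x) dx. -/
open MeasureTheory Filter

/-! For `ε > 0` the truncated transform `∫_{|x-y|>ε} f(y)/(x-y) dy` equals
`∫_{t>0} 1_{t>ε} (f(x-t) - f(x+t))/t dt`. For a `K`-Lipschitz integrable `f` the integrand
is dominated by `2K` on `(0,1]` and by `|f(x-t)| + |f(x+t)|` beyond, so dominated convergence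
gives the principal value, and the same majorant bounds the truncated transforms by
`2K + 2‖f‖₁` uniformly in `x` and `ε`. For fixed `ε` the kernel `1_{|x-y|>ε}/(x-y)` is bounded
and odd, so Fubini gives `∫ (H_ε f) g = -∫ f (H_ε g)`, and the uniform bound lets dominated
convergence pass to the limit `ε → 0`. Schwartz functions are integrable and Lipschitz. -/

open Set
open scoped Topology NNReal

namespace Hilbert

noncomputable def kernel (ε t : ℝ) : ℝ := if ε < |t| then t⁻¹ else 0

section Kernel

variable {ε t : ℝ}

lemma kernel_neg : kernel ε (-t) = -kernel ε t := by
  simp only [kernel, abs_neg, inv_neg]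
  split_ifs <;> simp

lemma abs_kernel_le_inv (hε : 0 < ε) : |kernel ε t| ≤ ε⁻¹ := by
  unfold kernel
  split_ifs with h
  · rw [abs_inv]; exact inv_anti₀ hε h.le
  · simp [hε.le]

lemma abs_kernel_le_inv_abs : |kernel ε t| ≤ |t|⁻¹ := by
  unfold kernel
  split_ifs <;> simp

lemma abs_kernel_mul_le (a : ℝ) : |kernel ε t * a| ≤ |a / t| := by
  rw [abs_mul, abs_div, div_eq_inv_mul]
  exact mul_le_mul_of_nonneg_right abs_kernel_le_inv_abs (abs_nonneg a)

lemma kernel_eventuallyEq (ht : t ≠ 0) : ∀ᶠ ε in 𝓝 0, kernel ε t = t⁻¹ := by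
  filter_upwards [Iio_mem_nhds (abs_pos.2 ht)] with ε hε
  exact if_pos hε

@[fun_prop]
lemma measurable_kernel : Measurable (kernel ε) :=
  Measurable.ite (measurableSet_lt measurable_const measurable_id.abs) measurable_inv
    measurable_const

end Kernel

noncomputable def truncHilbert (f : ℝ → ℝ) (ε x : ℝ) : ℝ := ∫ y, kernel ε (x - y) * f y

lemma hilbertPVR_iff {f : ℝ → ℝ} {x A : ℝ} :
    HilbertPVR f x A ↔
      Tendsto (fun ε => 1 / Real.pi * truncHilbert f ε x) (𝓝[>] 0) (𝓝 A) := by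
  suffices h : ∀ ε, ∫ y in {y : ℝ | ε < |x - y|}, f y / (x - y) = truncHilbert f ε x by
    simp only [HilbertPVR, h]
  intro ε
  rw [← integral_indicator (measurableSet_lt measurable_const (by fun_prop))]
  congr 1 with y
  simp only [indicator, mem_ofPred_eq, kernel]
  split_ifs <;> simp [div_eq_inv_mul]

section Lipschitz

variable {f : ℝ → ℝ} {K : ℝ≥0} {ε : ℝ}

lemma truncHilbert_eq_integral_Ioi (hfi : Integrable f) (hε : 0 < ε) (x : ℝ) :
    truncHilbert f ε x = ∫ t in Ioi 0, kernel ε t * (f (x - t) - f (x + t)) := by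
  have hint : Integrable (fun t => kernel ε t * f (x - t)) :=
    (hfi.comp_sub_left x).bdd_mul measurable_kernel.aestronglyMeasurable
      (.of_forall fun _ => abs_kernel_le_inv hε)
  calc truncHilbert f ε x = ∫ t, kernel ε t * f (x - t) := by
        rw [truncHilbert, ← integral_sub_left_eq_self _ volume x]
        simp only [sub_sub_cancel]
    _ = (∫ t in Iic 0, kernel ε t * f (x - t)) + ∫ t in Ioi 0, kernel ε t * f (x - t) :=
        (intervalIntegral.integral_Iic_add_Ioi hint.integrableOn hint.integrableOn).symm
    _ = ∫ t in Ioi 0, kernel ε t * (f (x - t) - f (x + t)) := by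
        rw [← neg_zero, ← integral_comp_neg_Ioi, neg_zero, add_comm,
          ← integral_add hint.integrableOn (hint.comp_neg.integrableOn)]
        simp only [kernel_neg, sub_neg_eq_add]
        congr 1 with t
        ring

lemma abs_sub_div_le (hf : LipschitzWith K f) (x t : ℝ) :
    |(f (x - t) - f (x + t)) / t| ≤ 2 * K := by
  rcases eq_or_ne t 0 with rfl | ht
  · simp
  rw [abs_div, div_le_iff₀ (abs_pos.2 ht)]
  calc |f (x - t) - f (x + t)| ≤ K * |x - t - (x + t)| := by
        simpa only [Real.dist_eq] using hf.dist_le_mul (x - t) (x + t)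
    _ = 2 * K * |t| := by
        rw [show x - t - (x + t) = -2 * t by ring, abs_mul, abs_neg, abs_two]; ring

noncomputable def majorant (K : ℝ≥0) (f : ℝ → ℝ) (x t : ℝ) : ℝ :=
  (Ioc 0 1).indicator (fun _ => 2 * (K : ℝ)) t + (|f (x - t)| + |f (x + t)|)

lemma majorant_nonneg (K : ℝ≥0) (f : ℝ → ℝ) (x t : ℝ) : 0 ≤ majorant K f x t :=
  add_nonneg (indicator_nonneg (fun _ _ => by positivity) t) (by positivity)

lemma abs_sub_div_le_majorant (hf : LipschitzWith K f) (x : ℝ) {t : ℝ} (ht : 0 < t) :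
    |(f (x - t) - f (x + t)) / t| ≤ majorant K f x t := by
  have hf_nonneg : 0 ≤ |f (x - t)| + |f (x + t)| := by positivity
  rcases le_or_gt t 1 with ht1 | ht1
  · rw [majorant, indicator_of_mem (show t ∈ Ioc 0 1 from ⟨ht, ht1⟩)]
    linarith [abs_sub_div_le hf x t]
  · rw [majorant, indicator_of_notMem (fun h => ht1.not_ge h.2), zero_add, abs_div,
      div_le_iff₀ (by positivity)]
    calc |f (x - t) - f (x + t)| ≤ |f (x - t)| + |f (x + t)| := abs_sub _ _
      _ ≤ (|f (x - t)| + |f (x + t)|) * |t| := by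
        rw [abs_of_pos ht]; exact le_mul_of_one_le_right hf_nonneg ht1.le

lemma integrable_majorant (hfi : Integrable f) (K : ℝ≥0) (x : ℝ) :
    Integrable (majorant K f x) :=
  ((integrableOn_const (by simp)).integrable_indicator measurableSet_Ioc).add
    ((hfi.comp_sub_left x).abs.add (hfi.comp_add_left x).abs)

lemma integral_majorant (hfi : Integrable f) (K : ℝ≥0) (x : ℝ) :
    ∫ t, majorant K f x t = 2 * K + 2 * ∫ y, |f y| := by
  have h_left : Integrable (fun t => |f (x - t)|) := (hfi.comp_sub_left x).abs
  have h_right : Integrable (fun t => |f (x + t)|) := (hfi.comp_add_left x).abs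
  have h_sum : Integrable (fun t => |f (x - t)| + |f (x + t)|) := h_left.add h_right
  unfold majorant
  rw [integral_add ((integrableOn_const (by simp)).integrable_indicator measurableSet_Ioc) h_sum,
    integral_add h_left h_right, integral_indicator_const _ measurableSet_Ioc,
    integral_sub_left_eq_self (fun y => |f y|), integral_add_left_eq_self (fun y => |f y|)]
  simp only [Real.volume_real_Ioc, sub_zero, zero_le_one, sup_of_le_left, smul_eq_mul, one_mul]
  ring

lemma integrableOn_Ioi_sub_div (hf : LipschitzWith K f) (hfi : Integrable f) (x : ℝ) :
    IntegrableOn (fun t => (f (x - t) - f (x + t)) / t) (Ioi 0) := by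
  have := hf.continuous
  refine (integrable_majorant hfi K x).integrableOn.mono'
    (Measurable.aestronglyMeasurable (by fun_prop)) ?_
  rw [ae_restrict_iff' measurableSet_Ioi]
  exact .of_forall fun t ht => abs_sub_div_le_majorant hf x ht

lemma tendsto_truncHilbert (hf : LipschitzWith K f) (hfi : Integrable f) (x : ℝ) :
    Tendsto (fun ε => truncHilbert f ε x) (𝓝[>] 0)
      (𝓝 (∫ t in Ioi 0, (f (x - t) - f (x + t)) / t)) := by
  have := hf.continuous
  refine Tendsto.congr' (eventually_mem_nhdsWithin.mono fun ε hε =>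
    (truncHilbert_eq_integral_Ioi hfi hε x).symm) ?_
  refine MeasureTheory.tendsto_integral_filter_of_dominated_convergence _
    (.of_forall fun ε => Measurable.aestronglyMeasurable (by fun_prop))
    (.of_forall fun ε => .of_forall fun t => abs_kernel_mul_le _)
    (integrableOn_Ioi_sub_div hf hfi x).abs ?_
  rw [ae_restrict_iff' measurableSet_Ioi]
  refine .of_forall fun t (ht : 0 < t) => tendsto_const_nhds.congr' ?_
  filter_upwards [nhdsWithin_le_nhds (kernel_eventuallyEq ht.ne')] with ε hε
  rw [hε, inv_mul_eq_div]

lemma abs_truncHilbert_le (hf : LipschitzWith K f) (hfi : Integrable f) (hε : 0 < ε) (x : ℝ) :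
    |truncHilbert f ε x| ≤ 2 * K + 2 * ∫ y, |f y| := by
  rw [truncHilbert_eq_integral_Ioi hfi hε, ← integral_majorant hfi K x, ← Real.norm_eq_abs]
  refine (norm_integral_le_of_norm_le (integrable_majorant hfi K x).integrableOn ?_).trans
    (setIntegral_le_integral (integrable_majorant hfi K x) (.of_forall (majorant_nonneg K f x)))
  rw [ae_restrict_iff' measurableSet_Ioi]
  exact .of_forall fun t ht => (abs_kernel_mul_le _).trans (abs_sub_div_le_majorant hf x ht)

end Lipschitz

section SkewAdjoint

variable {f g : ℝ → ℝ} {ε : ℝ}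

lemma aestronglyMeasurable_truncHilbert (hf : AEStronglyMeasurable f) (ε : ℝ) :
    AEStronglyMeasurable (truncHilbert f ε) :=
  AEStronglyMeasurable.integral_prod_right' (f := fun p : ℝ × ℝ => kernel ε (p.1 - p.2) * f p.2)
    ((measurable_kernel.comp (by fun_prop)).aestronglyMeasurable.mul hf.comp_snd)

lemma integrable_kernel_mul_prod (hε : 0 < ε) (hf : Integrable f) (hg : Integrable g) :
    Integrable (fun p : ℝ × ℝ => kernel ε (p.1 - p.2) * f p.2 * g p.1)
      (volume.prod volume) := by
  have h := (hg.mul_prod hf).bdd_mul (c := ε⁻¹)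
    (measurable_kernel.comp (by fun_prop)).aestronglyMeasurable
    (.of_forall fun p => abs_kernel_le_inv (t := p.1 - p.2) hε)
  refine h.congr (.of_forall fun p => ?_)
  simp only [Function.comp_apply]
  ring

lemma integral_truncHilbert_mul (hε : 0 < ε) (hf : Integrable f) (hg : Integrable g) :
    ∫ x, truncHilbert f ε x * g x = -∫ x, f x * truncHilbert g ε x := by
  calc ∫ x, truncHilbert f ε x * g x = ∫ x, ∫ y, kernel ε (x - y) * f y * g x := by
        simp only [truncHilbert, integral_mul_const]
    _ = ∫ y, ∫ x, kernel ε (x - y) * f y * g x :=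
        integral_integral_swap (integrable_kernel_mul_prod hε hf hg)
    _ = ∫ y, -(f y * truncHilbert g ε y) := by
        congr 1 with y
        rw [truncHilbert, ← integral_const_mul, ← integral_neg]
        congr 1 with x
        rw [← neg_sub, kernel_neg]
        ring
    _ = -∫ x, f x * truncHilbert g ε x := integral_neg _

lemma tendsto_integral_truncHilbert_mul {K : ℝ≥0} (hf : LipschitzWith K f) (hfi : Integrable f)
    (hgi : Integrable g) {Hf : ℝ → ℝ} (hHf : ∀ x, HilbertPVR f x (Hf x)) :
    Tendsto (fun ε => 1 / Real.pi * ∫ x, truncHilbert f ε x * g x) (𝓝[>] 0)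
      (𝓝 (∫ x, Hf x * g x)) := by
  simp_rw [← integral_const_mul, ← mul_assoc]
  refine MeasureTheory.tendsto_integral_filter_of_dominated_convergence
    (fun x => 1 / Real.pi * (2 * K + 2 * ∫ y, |f y|) * |g x|)
    (.of_forall fun ε => ((aestronglyMeasurable_truncHilbert hfi.aestronglyMeasurable ε).const_mul
      _).mul hgi.aestronglyMeasurable) ?_ (hgi.abs.const_mul _)
    (.of_forall fun x => (hilbertPVR_iff.1 (hHf x)).mul_const (g x))
  filter_upwards [eventually_mem_nhdsWithin] with ε hε
  refine .of_forall fun x => ?_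
  rw [Real.norm_eq_abs, abs_mul, abs_mul, abs_of_pos (by positivity : 0 < 1 / Real.pi)]
  gcongr
  exact abs_truncHilbert_le hf hfi hε x

theorem integral_hilbert_mul_eq_neg {K L : ℝ≥0} (hf : LipschitzWith K f) (hfi : Integrable f)
    (hg : LipschitzWith L g) (hgi : Integrable g) {Hf Hg : ℝ → ℝ}
    (hHf : ∀ x, HilbertPVR f x (Hf x)) (hHg : ∀ x, HilbertPVR g x (Hg x)) :
    ∫ x, Hf x * g x = -∫ x, f x * Hg x := by
  have h_skew : (fun ε => 1 / Real.pi * ∫ x, truncHilbert f ε x * g x) =ᶠ[𝓝[>] 0]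
      fun ε => -(1 / Real.pi * ∫ x, truncHilbert g ε x * f x) := by
    filter_upwards [eventually_mem_nhdsWithin] with ε hε
    simp_rw [integral_truncHilbert_mul hε hfi hgi, mul_comm (truncHilbert g ε _), mul_neg]
  have h_lim := tendsto_nhds_unique
    ((tendsto_integral_truncHilbert_mul hf hfi hgi hHf).congr' h_skew)
    (tendsto_integral_truncHilbert_mul hg hgi hfi hHg).neg
  simpa only [mul_comm (Hg _)] using h_lim

end SkewAdjoint

end Hilbert

lemma SchwartzMap.exists_lipschitzWith (f : SchwartzMap ℝ ℝ) : ∃ K, LipschitzWith K f := by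
  obtain ⟨C, -, hC⟩ := (SchwartzMap.derivCLM ℝ ℝ f).decay 0 0
  refine ⟨C.toNNReal, lipschitzWith_of_nnnorm_deriv_le f.differentiable fun y => ?_⟩
  have := hC y
  simp only [pow_zero, one_mul, norm_iteratedFDeriv_zero, SchwartzMap.derivCLM_apply] at this
  rw [← NNReal.coe_le_coe, coe_nnnorm]
  exact this.trans (Real.le_coe_toNNReal C)

open Hilbert in
/-- For Schwartz functions the Hilbert transform exists pointwise and is skew-adjoint:
`∫ (Hf) g = -∫ f (Hg)`. -/
theorem hilbert_skew_adjoint :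
    (∀ f : SchwartzMap ℝ ℝ, ∀ x : ℝ, ∃ A : ℝ, HilbertPVR (⇑f) x A) ∧
    ∀ (f g : SchwartzMap ℝ ℝ) (Hf Hg : ℝ → ℝ),
      (∀ x : ℝ, HilbertPVR (⇑f) x (Hf x)) →
      (∀ x : ℝ, HilbertPVR (⇑g) x (Hg x)) →
      ∫ x : ℝ, Hf x * g x = -∫ x : ℝ, f x * Hg x := by
  refine ⟨fun f x => ?_, fun f g Hf Hg hHf hHg => ?_⟩
  · obtain ⟨K, hf⟩ := f.exists_lipschitzWith
    exact ⟨_, hilbertPVR_iff.2 ((tendsto_truncHilbert hf f.integrable x).const_mul _)⟩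
  · obtain ⟨K, hf⟩ := f.exists_lipschitzWith
    obtain ⟨L, hg⟩ := g.exists_lipschitzWith
    exact integral_hilbert_mul_eq_neg hf f.integrable hg g.integrable hHf hHg
end
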